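/- arXiv:1812.09259 — 3 statements merged into one kernel-verified Lean document; each statement's English description precedes it below -/
import Mathlib

section
/- Let L be the translation-invariant homogeneous equation c_1 x_1 + ... + c_ℓ x_ℓ = 0 (with ∑ c_i = 0) and let S be a finite L-free set of integers. Then for all but finitely many positive integers α, the translated set S + α is L-sub-equation-free; that is, S + α contains no non-trivial solution to any sub-equation c_{q_1} x_{q_1} + ... + c_{q_k} x_{q_k} = 0 obtained by deleting a (possibly empty) set of terms from L. -/
/-- A solution `x` (restricted to the index set `Q`) of the sub-equation
`∑ i ∈ Q, c i * x i = 0` is trivial if there is a partition of `Q` (given as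
fibers of a labeling `P`) such that `x` is constant on each class and the
coefficients sum to zero on each class. -/
def IsTrivialSubSol {ℓ : ℕ} (Q : Finset (Fin ℓ)) (c : Fin ℓ → ℤ)
    (x : Fin ℓ → ℤ) : Prop :=
  ∃ P : Fin ℓ → ℕ,
    (∀ i ∈ Q, ∀ j ∈ Q, P i = P j → x i = x j) ∧
    (∀ r : ℕ, ∑ i ∈ Q.filter (fun i => P i = r), c i = 0)

/-- A set `T` is sub-equation-free for the homogeneous equation with
coefficients `c` if, for every nonempty set `Q` of indices (a sub-equation of
`L`, including `L` itself), every solution of the corresponding sub-equation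
with entries in `T` is trivial. -/
def SubEqFree {ℓ : ℕ} (c : Fin ℓ → ℤ) (T : Set ℤ) : Prop :=
  ∀ Q : Finset (Fin ℓ), Q.Nonempty →
    ∀ x : Fin ℓ → ℤ, (∀ i ∈ Q, x i ∈ T) → (∑ i ∈ Q, c i * x i = 0) →
      IsTrivialSubSol Q c x

lemma core {ℓ : ℕ} (c : Fin ℓ → ℤ) (hti : ∑ i, c i = 0)
    (S : Set ℤ)
    (hSfree : ∀ x : Fin ℓ → ℤ, (∀ i, x i ∈ S) → (∑ i, c i * x i = 0) →
      IsTrivialSubSol Finset.univ c x)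
    (Q : Finset (Fin ℓ)) (hQc : ∑ i ∈ Q, c i = 0)
    (x : Fin ℓ → ℤ) (hx : ∀ i ∈ Q, x i ∈ S)
    (hsum : ∑ i ∈ Q, c i * x i = 0) : IsTrivialSubSol Q c x := by
  rcases Q.eq_empty_or_nonempty with rfl | ⟨i₀, hi₀⟩
  · exact ⟨fun _ => 0, by simp, fun r => by simp⟩
  set t := x i₀ with ht_def
  have ht : t ∈ S := hx i₀ hi₀
  set x' : Fin ℓ → ℤ := fun i => if i ∈ Q then x i else t with hx'_def
  have hx'Q : ∀ i ∈ Q, x' i = x i := fun i hi => by simp [hx'_def, hi]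
  have hx'S : ∀ i, x' i ∈ S := by
    intro i
    by_cases h : i ∈ Q
    · simpa [hx'_def, h] using hx i h
    · simpa [hx'_def, h] using ht
  have hsum' : ∑ i, c i * x' i = 0 := by
    rw [← Finset.sum_add_sum_compl Q (fun i => c i * x' i)]
    have h1 : ∑ i ∈ Q, c i * x' i = 0 := by
      rw [Finset.sum_congr rfl fun i hi => by rw [hx'Q i hi]]; exact hsum
    have h2 : ∑ i ∈ Qᶜ, c i * x' i = (∑ i ∈ Qᶜ, c i) * t := by
      rw [Finset.sum_mul]
      refine Finset.sum_congr rfl fun i hi => ?_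
      have : i ∉ Q := by simpa using hi
      simp [hx'_def, this]
    have h3 : ∑ i ∈ Qᶜ, c i = 0 := by
      have := Finset.sum_add_sum_compl Q c
      omega
    rw [h1, h2, h3]; ring
  obtain ⟨P, hPc, hPs⟩ := hSfree x' hx'S hsum'
  set N : ℕ := Finset.univ.sup P + 1 with hN_def
  have hPN : ∀ i, P i ≠ N := fun i =>
    Nat.ne_of_lt (Nat.lt_succ_of_le (Finset.le_sup (Finset.mem_univ i)))
  set P' : Fin ℓ → ℕ := fun i => if x' i = t then N else P i with hP'_def
  -- key: fibers of P' (label ≠ N) within Q equal full fibers of P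
  have key : ∀ r, r ≠ N → ∀ i ∈ Q, P' i = r →
      Q.filter (fun j => P' j = r) = Finset.univ.filter (fun j => P j = r) := by
    intro r hrN i hiQ hir
    have hxit : x' i ≠ t := by
      intro h; rw [hP'_def] at hir; simp [h] at hir; exact hrN hir.symm
    have hPi : P i = r := by rw [hP'_def] at hir; simpa [hxit] using hir
    ext j
    simp only [Finset.mem_filter, Finset.mem_univ, true_and]
    constructor
    · rintro ⟨hjQ, hjr⟩
      have hxjt : x' j ≠ t := by
        intro h; rw [hP'_def] at hjr; simp [h] at hjr; exact hrN hjr.symm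
      rw [hP'_def] at hjr; simpa [hxjt] using hjr
    · intro hPj
      have hxij : x' j = x' i :=
        hPc j (Finset.mem_univ j) i (Finset.mem_univ i) (hPj.trans hPi.symm)
      have hxjt : x' j ≠ t := by rw [hxij]; exact hxit
      have hjQ : j ∈ Q := by
        by_contra h
        exact hxjt (by simp [hx'_def, h])
      exact ⟨hjQ, by rw [hP'_def]; simpa [hxjt] using hPj⟩
  have hr0 : ∀ r, r ≠ N → ∑ i ∈ Q.filter (fun j => P' j = r), c i = 0 := by
    intro r hrN
    rcases (Q.filter (fun j => P' j = r)).eq_empty_or_nonempty with he | ⟨i, hi⟩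
    · simp [he]
    · rw [Finset.mem_filter] at hi
      rw [key r hrN i hi.1 hi.2]
      exact hPs r
  refine ⟨P', ?_, ?_⟩
  · intro i hi j hj hij
    by_cases hit : x' i = t <;> by_cases hjt : x' j = t
    · rw [← hx'Q i hi, ← hx'Q j hj, hit, hjt]
    · exfalso; rw [hP'_def] at hij; simp [hit, hjt] at hij
      exact hPN j hij.symm
    · exfalso; rw [hP'_def] at hij; simp [hit, hjt] at hij
      exact hPN i hij
    · have : P i = P j := by rw [hP'_def] at hij; simpa [hit, hjt] using hij
      rw [← hx'Q i hi, ← hx'Q j hj]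
      exact hPc i (Finset.mem_univ i) j (Finset.mem_univ j) this
  · intro r
    rcases eq_or_ne r N with hr | hrN
    · -- sum over the N-class
      rw [hr]
      have hsplit := Finset.sum_filter_add_sum_filter_not Q (fun j => P' j = N) c
      set T : Finset (Fin ℓ) := Q.filter (fun j => ¬ P' j = N) with hT_def
      have hT0 : ∑ i ∈ T, c i = 0 := by
        rw [← Finset.sum_fiberwise_of_maps_to (g := P') (t := T.image P')
          (fun i hi => Finset.mem_image_of_mem P' hi) c]
        refine Finset.sum_eq_zero fun s hs => ?_
        have hsN : s ≠ N := by
          obtain ⟨j, hj, hjs⟩ := Finset.mem_image.mp hs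
          rw [hT_def, Finset.mem_filter] at hj
          rw [← hjs]; exact hj.2
        have : T.filter (fun j => P' j = s) = Q.filter (fun j => P' j = s) := by
          rw [hT_def, Finset.filter_filter]
          refine Finset.filter_congr fun j hj => ?_
          constructor
          · rintro ⟨_, h⟩; exact h
          · intro h; exact ⟨by rw [h]; exact hsN, h⟩
        rw [this]
        exact hr0 s hsN
      omega
    · exact hr0 r hrN

theorem stmt_7 (ℓ : ℕ) (c : Fin ℓ → ℤ) (hti : ∑ i, c i = 0)
    (S : Set ℤ) (hSfin : S.Finite)
    (hSfree : ∀ x : Fin ℓ → ℤ, (∀ i, x i ∈ S) → (∑ i, c i * x i = 0) →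
      IsTrivialSubSol Finset.univ c x) :
    {α : ℤ | 0 < α ∧ ¬ SubEqFree c ((fun s => s + α) '' S)}.Finite := by
  set g : Finset (Fin ℓ) × (Fin ℓ → ℤ) → ℤ :=
    fun p => (-(∑ i ∈ p.1, c i * p.2 i)) / (∑ i ∈ p.1, c i) with hg_def
  have hF : {f : Fin ℓ → ℤ | ∀ i, f i ∈ insert (0:ℤ) S}.Finite := by
    have := Set.Finite.pi (fun _ : Fin ℓ => hSfin.insert 0)
    exact this.subset (fun f hf => by simpa [Set.mem_pi] using hf)
  refine Set.Finite.subset (Set.Finite.image g (Set.Finite.prod Set.finite_univ hF)) ?_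
  rintro α ⟨hα, hbad⟩
  simp only [SubEqFree, not_forall] at hbad
  obtain ⟨Q, hQne, y, hy, hsumy, hnt⟩ := hbad
  set s : Fin ℓ → ℤ := fun i => if i ∈ Q then y i - α else 0 with hs_def
  have hsS : ∀ i ∈ Q, s i ∈ S := by
    intro i hi
    obtain ⟨u, hu, huy⟩ := hy i hi
    have : s i = u := by simp [hs_def, hi, ← huy]
    rw [this]; exact hu
  have hys : ∀ i ∈ Q, y i = s i + α := fun i hi => by simp [hs_def, hi]
  have hsum_split : ∑ i ∈ Q, c i * s i + (∑ i ∈ Q, c i) * α = 0 := by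
    rw [Finset.sum_mul, ← Finset.sum_add_distrib, ← hsumy]
    exact Finset.sum_congr rfl fun i hi => by rw [hys i hi]; ring
  by_cases hQ0 : ∑ i ∈ Q, c i = 0
  · exfalso
    apply hnt
    have hsum_s : ∑ i ∈ Q, c i * s i = 0 := by rw [hQ0] at hsum_split; linarith
    obtain ⟨P, hPc, hPs⟩ := core c hti S hSfree Q hQ0 s hsS hsum_s
    exact ⟨P, fun i hi j hj hij => by
      rw [hys i hi, hys j hj, hPc i hi j hj hij], hPs⟩
  · refine ⟨(Q, s), ⟨Set.mem_univ _, ?_⟩, ?_⟩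
    · intro i
      by_cases h : i ∈ Q
      · exact Set.mem_insert_iff.mpr (Or.inr (hsS i h))
      · simp [hs_def, h]
    · have : (∑ i ∈ Q, c i) * α = -(∑ i ∈ Q, c i * s i) := by linarith
      rw [hg_def]
      simp only
      rw [← this, Int.mul_ediv_cancel_left α hQ0]
end

section
/- Let c_1, ..., c_ℓ be nonzero integers, ℓ ≥ 3, that are not all of the same sign (i.e., some c_i > 0 and some c_j < 0). Then there is a reordering and possible global sign change producing an equivalent equation a_1 x_1 + a_2 x_2 + b_1 y_1 + ... + b_{ℓ−3} y_{ℓ−3} = b_0 y_0 (where −b_0 is one of the original ± c_i and the left-hand coefficients are the remaining ones) such that: a_1 ≤ a_2 ≤ b_1 ≤ ... ≤ b_{ℓ−3}; b_0 > 0; all left-hand coefficients are nonzero; and the sum of the absolute values of the negative left-hand coefficients is strictly less than the sum of the positive left-hand coefficients. -/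
theorem stmt_8 (ℓ : ℕ) (hℓ : 3 ≤ ℓ) (c : Fin ℓ → ℤ) (hc : ∀ i, c i ≠ 0)
    (hpos : ∃ i, 0 < c i) (hneg : ∃ j, c j < 0) :
    ∃ (ε : ℤ) (σ : Equiv.Perm (Fin ℓ)), (ε = 1 ∨ ε = -1) ∧
      (∀ i j : Fin ℓ, i ≤ j → (j : ℕ) < ℓ - 1 → ε * c (σ i) ≤ ε * c (σ j)) ∧
      0 < -(ε * c (σ ⟨ℓ - 1, by omega⟩)) ∧
      (∀ i : Fin ℓ, (i : ℕ) < ℓ - 1 → ε * c (σ i) ≠ 0) ∧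
      (∑ i ∈ Finset.univ.filter
          (fun i : Fin ℓ => (i : ℕ) < ℓ - 1 ∧ ε * c (σ i) < 0), (-(ε * c (σ i))))
        < ∑ i ∈ Finset.univ.filter
          (fun i : Fin ℓ => (i : ℕ) < ℓ - 1 ∧ 0 < ε * c (σ i)), ε * c (σ i) := by
  classical
  set S : ℤ := ∑ i, c i with hS
  -- choose ε and k such that ε * c k < 0 and ε * (S - c k) > 0
  obtain ⟨ε, k, hε, hk, hrest⟩ :
      ∃ (ε : ℤ) (k : Fin ℓ), (ε = 1 ∨ ε = -1) ∧ ε * c k < 0 ∧ 0 < ε * (S - c k) := by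
    rcases le_or_gt 0 S with hS0 | hS0
    · obtain ⟨j, hj⟩ := hneg
      exact ⟨1, j, Or.inl rfl, by simpa using hj, by nlinarith⟩
    · obtain ⟨i, hi⟩ := hpos
      exact ⟨-1, i, Or.inr rfl, by nlinarith, by nlinarith⟩
  have hεabs : ∀ x : ℤ, |ε * x| = |x| := by
    intro x; rcases hε with h | h <;> simp [h, abs_mul]
  set M : ℤ := 1 + ∑ i, |c i| with hM
  have hMlt : ∀ i, ε * c i < M := by
    intro i
    have h1 : ε * c i ≤ |c i| := by rw [← hεabs (c i)]; exact le_abs_self _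
    have h2 : |c i| ≤ ∑ j, |c j| :=
      Finset.single_le_sum (fun j _ => abs_nonneg (c j)) (Finset.mem_univ i)
    omega
  set f : Fin ℓ → ℤ := fun i => if i = k then M else ε * c i with hf
  set σ : Equiv.Perm (Fin ℓ) := Tuple.sort f with hσ
  have hmono : Monotone (f ∘ σ) := Tuple.monotone_sort f
  set last : Fin ℓ := ⟨ℓ - 1, by omega⟩ with hlast
  have hσlast : σ last = k := by
    by_contra h
    -- then f (σ last) < M = f (σ (σ⁻¹ k)) but last is the greatest index
    have hle : σ⁻¹ k ≤ last := by
      rw [Fin.le_def]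
      have := (σ⁻¹ k).isLt
      simp only [hlast]
      omega
    have := hmono hle
    simp only [Function.comp_apply] at this
    rw [← Equiv.Perm.mul_apply, mul_inv_cancel, Equiv.Perm.one_apply] at this
    simp only [hf, if_pos rfl, if_neg h] at this
    exact absurd this (not_le.mpr (hMlt _))
  have hne : ∀ i : Fin ℓ, (i : ℕ) < ℓ - 1 → σ i ≠ k := by
    intro i hi h
    have : i = last := by
      have := σ.injective (h.trans hσlast.symm)
      exact this
    rw [this] at hi; simp [hlast] at hi
  have hfval : ∀ i : Fin ℓ, (i : ℕ) < ℓ - 1 → f (σ i) = ε * c (σ i) := by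
    intro i hi; simp [hf, hne i hi]
  refine ⟨ε, σ, hε, ?_, ?_, ?_, ?_⟩
  · intro i j hij hj
    have hi : (i : ℕ) < ℓ - 1 := lt_of_le_of_lt hij hj
    have := hmono hij
    simpa [Function.comp, hfval i hi, hfval j hj] using this
  · rw [hσlast]; omega
  · intro i hi
    have := hc (σ i)
    rcases hε with h | h <;> simp [h] <;> omega
  · -- sum inequality
    have key : (0 : ℤ) < ∑ i ∈ Finset.univ.filter (fun i : Fin ℓ => (i : ℕ) < ℓ - 1),
        ε * c (σ i) := by
      have hsplit : (Finset.univ : Finset (Fin ℓ)) =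
          insert last (Finset.univ.filter (fun i : Fin ℓ => (i : ℕ) < ℓ - 1)) := by
        ext i
        simp only [Finset.mem_univ, Finset.mem_insert, Finset.mem_filter, true_and, true_iff]
        rcases eq_or_ne i last with h | h
        · exact Or.inl h
        · right
          have := i.isLt
          have : (i : ℕ) ≠ ℓ - 1 := fun hh => h (Fin.ext hh)
          omega
      have hnotmem : last ∉ Finset.univ.filter (fun i : Fin ℓ => (i : ℕ) < ℓ - 1) := by
        simp [hlast]
      have htot : ∑ i, ε * c (σ i) = ε * S := by
        rw [← Finset.mul_sum, hS]
        congr 1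
        exact (Equiv.sum_comp σ c)
      have := htot
      rw [hsplit, Finset.sum_insert hnotmem] at this
      have hlastval : ε * c (σ last) = ε * c k := by rw [hσlast]
      have : ∑ i ∈ Finset.univ.filter (fun i : Fin ℓ => (i : ℕ) < ℓ - 1), ε * c (σ i)
          = ε * S - ε * c k := by omega
      rw [this]
      have : ε * (S - c k) = ε * S - ε * c k := by ring
      omega
    have hparts : Finset.univ.filter (fun i : Fin ℓ => (i : ℕ) < ℓ - 1) =
        (Finset.univ.filter (fun i : Fin ℓ => (i : ℕ) < ℓ - 1 ∧ ε * c (σ i) < 0)) ∪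
        (Finset.univ.filter (fun i : Fin ℓ => (i : ℕ) < ℓ - 1 ∧ 0 < ε * c (σ i))) := by
      ext i
      simp only [Finset.mem_filter, Finset.mem_union, Finset.mem_univ, true_and]
      constructor
      · intro hi
        have hne0 : ε * c (σ i) ≠ 0 := by
          have := hc (σ i)
          rcases hε with h | h <;> simp [h] <;> omega
        rcases lt_trichotomy (ε * c (σ i)) 0 with h | h | h
        · exact Or.inl ⟨hi, h⟩
        · exact absurd h hne0
        · exact Or.inr ⟨hi, h⟩
      · rintro (⟨hi, _⟩ | ⟨hi, _⟩) <;> exact hi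
    have hdisj : Disjoint
        (Finset.univ.filter (fun i : Fin ℓ => (i : ℕ) < ℓ - 1 ∧ ε * c (σ i) < 0))
        (Finset.univ.filter (fun i : Fin ℓ => (i : ℕ) < ℓ - 1 ∧ 0 < ε * c (σ i))) := by
      rw [Finset.disjoint_filter]
      rintro i _ ⟨_, h1⟩ ⟨_, h2⟩
      omega
    rw [hparts, Finset.sum_union hdisj] at key
    have hnegsum : ∑ i ∈ Finset.univ.filter
        (fun i : Fin ℓ => (i : ℕ) < ℓ - 1 ∧ ε * c (σ i) < 0), ε * c (σ i)
        = -∑ i ∈ Finset.univ.filter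
        (fun i : Fin ℓ => (i : ℕ) < ℓ - 1 ∧ ε * c (σ i) < 0), (-(ε * c (σ i))) := by
      rw [← Finset.sum_neg_distrib]; simp
    rw [hnegsum] at key
    omega
end

section
/- Let ε, ε' be rationals with 0 < ε' < ε < 1, and let a, k, s be positive integers with k ≤ a. Set r = max(0, ⌈(k − εa)/((ε − ε')s)⌉), k* = k + r·ε'·s (assumed an integer), a* = a + r·s, and t = ⌈(ε·a* − k*)/(1 − ε)⌉. Then ⌈ε·(a* + t)⌉ = k* + t. -/
theorem stmt_17 (ε ε' : ℚ) (hε'0 : 0 < ε') (hεε : ε' < ε) (hε1 : ε < 1)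
    (a k s : ℕ) (ha : 0 < a) (hk : 0 < k) (hs : 0 < s) (hka : k ≤ a)
    (r : ℤ) (hr : r = max 0 ⌈((k : ℚ) - ε * a) / ((ε - ε') * s)⌉)
    (kstar : ℤ) (hkstar : (kstar : ℚ) = (k : ℚ) + (r : ℚ) * ε' * s)
    (astar : ℤ) (hastar : astar = (a : ℤ) + r * s)
    (t : ℤ) (ht : t = ⌈(ε * (astar : ℚ) - (kstar : ℚ)) / (1 - ε)⌉) :
    ⌈ε * ((astar : ℚ) + (t : ℚ))⌉ = kstar + t := by
  have hpos : (0:ℚ) < 1 - ε := by linarith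
  have h1 : (ε * (astar:ℚ) - kstar) / (1 - ε) ≤ (t:ℚ) := by
    rw [ht]; exact Int.le_ceil _
  have h2 : (t:ℚ) < (ε * (astar:ℚ) - kstar) / (1 - ε) + 1 := by
    rw [ht]; exact_mod_cast Int.ceil_lt_add_one _
  have h1' : ε * (astar:ℚ) - kstar ≤ (t:ℚ) * (1 - ε) := (div_le_iff₀ hpos).mp h1
  have h2' : ((t:ℚ) - 1) * (1 - ε) < ε * (astar:ℚ) - kstar := by
    have := (lt_div_iff₀ hpos).mp (by linarith : (t:ℚ) - 1 < (ε * (astar:ℚ) - kstar) / (1 - ε))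
    linarith
  rw [Int.ceil_eq_iff]
  push_cast
  constructor <;> nlinarith
end
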